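/- Let CS_{a,b} = K_a ∨ (complement of K_b) be the complete split graph with a ≥ 1, b ≥ 2 and n = a + b vertices. Then for α ∈ [0,1] the spectrum of RD_α(CS_{a,b}) consists exactly of: the eigenvalue αn − 1 with multiplicity a−1, the eigenvalue (α(n+a)−1)/2 with multiplicity b−1, and the two eigenvalues [(α+1)n − ½b − 3/2 ± √(((α−1)(a−b) − ½b + ½)² + 4(1−α)²ab)] / 2. -/

import Mathlib

open Matrix BigOperators Finset

/-- The reciprocal distance (Harary) matrix of a graph. -/
noncomputable def RDmat {V : Type*} [Fintype V] [DecidableEq V] (G : SimpleGraph V) :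
    Matrix V V ℝ :=
  Matrix.of fun i j => if i = j then 0 else (1 : ℝ) / (G.dist i j)

/-- The reciprocal transmission of a vertex. -/
noncomputable def RTr {V : Type*} [Fintype V] [DecidableEq V] (G : SimpleGraph V) (v : V) : ℝ :=
  ∑ u ∈ Finset.univ.erase v, (1 : ℝ) / (G.dist u v)

/-- The generalized reciprocal distance matrix `RD_α(G) = α RT(G) + (1-α) RD(G)`. -/
noncomputable def RDalpha {V : Type*} [Fintype V] [DecidableEq V] (G : SimpleGraph V) (α : ℝ) :
    Matrix V V ℝ :=
  α • Matrix.diagonal (RTr G) + (1 - α) • RDmat G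

/-- The `i`-th largest eigenvalue (1-indexed, with multiplicity) of a real matrix,
obtained from the roots of its characteristic polynomial sorted decreasingly. -/
noncomputable def eigDesc {V : Type*} [Fintype V] [DecidableEq V] (M : Matrix V V ℝ) (i : ℕ) : ℝ :=
  ((M.charpoly.roots.sort (· ≤ ·)).reverse).getD (i - 1) 0

/-- The spectral radius (largest eigenvalue) of a real symmetric matrix. -/
noncomputable def specRadius {V : Type*} [Fintype V] [DecidableEq V] (M : Matrix V V ℝ) : ℝ :=
  eigDesc M 1

/-- The join of two graphs. -/
def gjoin {V₁ V₂ : Type*} (G₁ : SimpleGraph V₁) (G₂ : SimpleGraph V₂) :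
    SimpleGraph (V₁ ⊕ V₂) where
  Adj x y := match x, y with
    | Sum.inl a, Sum.inl b => G₁.Adj a b
    | Sum.inr a, Sum.inr b => G₂.Adj a b
    | Sum.inl _, Sum.inr _ => True
    | Sum.inr _, Sum.inl _ => True
  symm := ⟨by rintro (a|a) (b|b) h <;> first | exact G₁.symm h | exact G₂.symm h | exact G₁.adj_symm h | exact G₂.adj_symm h | trivial⟩
  loopless := ⟨by rintro (a|a) h <;> first | exact G₁.loopless a h | exact G₂.loopless a h | exact G₁.irrefl h | exact G₂.irrefl h⟩

/-!
All vertices of a part of `CS_{a,b}` look alike, so `RD_α(CS_{a,b}) = U K Uᵀ + D`, where `U` is the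
indicator matrix of the two parts, `K` is `1 - α` times the 2×2 matrix of reciprocal distances
between parts, and `D` is a diagonal matrix that is constant on each part. Differences `e_i - e_0`
of basis vectors inside a part are killed by `Uᵀ`, hence are eigenvectors for the diagonal entry of
their part; this gives the eigenvalues of multiplicities `a - 1` and `b - 1`. Completing them with
the first vertex of each part to a basis makes the matrix block triangular, with the quotient
matrix `diag(a, b) K + diag(d)` as the remaining 2×2 block; its two eigenvalues come from the
quadratic formula.
-/

open Polynomial

namespace Matrix

variable {R : Type*} [CommRing R] {m n : Type*} [Fintype m] [Fintype n] [DecidableEq m]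
  [DecidableEq n]

theorem charpoly_mul_mul_of_mul_eq_one (M : Matrix m m R) {P : Matrix m n R} {Q : Matrix n m R}
    (hcard : Fintype.card m = Fintype.card n) (hQP : Q * P = 1) :
    (Q * M * P).charpoly = M.charpoly := by
  have hPQ : P * Q = 1 := (mul_eq_one_comm_of_card_eq _ _ _ hcard.symm).mp hQP
  refine (isRegular_X_pow (Fintype.card m)).left.eq_iff.mp ?_
  rw [Matrix.mul_assoc, charpoly_mul_comm', Matrix.mul_assoc, hPQ, Matrix.mul_one, hcard]

theorem charpoly_fin_two_eq_of_sq_eq {K : Type*} [Field K] [NeZero (2 : K)]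
    (M : Matrix (Fin 2) (Fin 2) K) {t s : K} (ht : M.trace = t)
    (hs : s ^ 2 = t ^ 2 - 4 * M.det) :
    M.charpoly = (X - C ((t + s) / 2)) * (X - C ((t - s) / 2)) := by
  have hsum : (t + s) / 2 + (t - s) / 2 = M.trace := by
    rw [ht]
    field_simp
    ring
  have hprod : (t + s) / 2 * ((t - s) / 2) = M.det := by
    field_simp
    linear_combination -hs
  rw [charpoly_fin_two, ← hsum, ← hprod, C_add, C_mul]
  ring

end Matrix

theorem Polynomial.roots_pow_mul_pow_mul_X_sub_C_mul_X_sub_C {R : Type*} [CommRing R]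
    [IsDomain R] (p q u v : R) (m k : ℕ) :
    ((X - C p) ^ m * (X - C q) ^ k * ((X - C u) * (X - C v))).roots =
      Multiset.replicate m p + Multiset.replicate k q + {u, v} := by
  simp [roots_mul, X_sub_C_ne_zero, Multiset.nsmul_singleton, Multiset.insert_eq_cons]

section TwoParts

variable (R : Type*) [CommRing R]

def sumPart {ι κ : Type*} : ι ⊕ κ → Fin 2 := Sum.elim (fun _ ↦ 0) (fun _ ↦ 1)

def partIndicator (ι κ : Type*) : Matrix (ι ⊕ κ) (Fin 2) R :=
  of fun r a ↦ if sumPart r = a then 1 else 0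

variable {R}

theorem partIndicator_mul_mul_transpose_apply {ι κ : Type*} [Fintype ι] [Fintype κ]
    (K : Matrix (Fin 2) (Fin 2) R) (r s : ι ⊕ κ) :
    (partIndicator R ι κ * K * (partIndicator R ι κ)ᵀ) r s = K (sumPart r) (sumPart s) := by
  simp [partIndicator, mul_apply]

theorem partIndicator_transpose_mul_self {ι κ : Type*} [Fintype ι] [Fintype κ] :
    (partIndicator R ι κ)ᵀ * partIndicator R ι κ =
      diagonal ![(Fintype.card ι : R), Fintype.card κ] := by
  ext a b
  fin_cases a <;> fin_cases b <;> simp [partIndicator, sumPart, mul_apply]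

theorem partIndicator_transpose_mul_diagonal {ι κ : Type*} [Fintype ι] [Fintype κ]
    [DecidableEq ι] [DecidableEq κ] (d : Fin 2 → R) :
    (partIndicator R ι κ)ᵀ * diagonal (d ∘ sumPart : ι ⊕ κ → R) =
      diagonal d * (partIndicator R ι κ)ᵀ := by
  ext a (r | r) <;> fin_cases a <;> simp [partIndicator, sumPart, diagonal_mul]

theorem diagonal_comp_sumPart_mul_fromBlocks {ι κ ι' κ' : Type*} [Fintype ι] [Fintype κ]
    [Fintype ι'] [Fintype κ'] [DecidableEq ι] [DecidableEq κ] [DecidableEq ι'] [DecidableEq κ']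
    (d : Fin 2 → R)
    (A : Matrix ι ι' R) (B : Matrix κ κ' R) :
    diagonal (d ∘ sumPart : ι ⊕ κ → R) * fromBlocks A 0 0 B =
      fromBlocks A 0 0 B * diagonal (d ∘ sumPart : ι' ⊕ κ' → R) := by
  ext (r | r) (s | s) <;> simp [sumPart, mul_comm]

variable (R) (m k : ℕ)

def succDiff : Matrix (Fin (m + 1)) (Fin m) R :=
  of fun r i ↦ (if r = i.succ then 1 else 0) - if r = 0 then 1 else 0

def succSelect : Matrix (Fin m) (Fin (m + 1)) R :=
  of fun i r ↦ if r = i.succ then 1 else 0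

def partFirstIndicator : Matrix (Fin (m + 1) ⊕ Fin (k + 1)) (Fin 2) R :=
  of fun r a ↦ if r = ![Sum.inl 0, Sum.inr 0] a then 1 else 0

variable {R}

theorem succSelect_mul_succDiff : succSelect R m * succDiff R m = 1 := by
  ext i j
  simp [succSelect, succDiff, mul_apply, one_apply]

theorem sum_succDiff (i : Fin m) : ∑ r, succDiff R m r i = 0 := by
  simp [succDiff, Finset.sum_sub_distrib]

theorem partIndicator_transpose_mul_partFirstIndicator :
    (partIndicator R (Fin (m + 1)) (Fin (k + 1)))ᵀ * partFirstIndicator R m k = 1 := by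
  ext a b
  fin_cases a <;> fin_cases b <;>
    simp [partIndicator, sumPart, partFirstIndicator, mul_apply, Fintype.sum_sum_type]

theorem partIndicator_transpose_mul_fromBlocks_succDiff :
    (partIndicator R (Fin (m + 1)) (Fin (k + 1)))ᵀ *
      fromBlocks (succDiff R m) 0 0 (succDiff R k) = 0 := by
  ext a (i | i) <;> fin_cases a <;>
    simp [partIndicator, sumPart, mul_apply, Fintype.sum_sum_type, sum_succDiff]

theorem fromBlocks_succSelect_mul_partFirstIndicator :
    fromBlocks (succSelect R m) 0 0 (succSelect R k) * partFirstIndicator R m k = 0 := by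
  ext (i | i) a <;> fin_cases a <;>
    simp [succSelect, partFirstIndicator, mul_apply, Fintype.sum_sum_type,
      (Fin.succ_ne_zero _).symm]

theorem fromBlocks_succSelect_mul_fromBlocks_succDiff :
    fromBlocks (succSelect R m) 0 0 (succSelect R k) *
      fromBlocks (succDiff R m) 0 0 (succDiff R k) = 1 := by
  simp [fromBlocks_multiply, succSelect_mul_succDiff, fromBlocks_one]

/-- With `P = [partFirstIndicator | fromBlocks succDiff 0 0 succDiff]` and its left inverse
`Q = [partIndicatorᵀ; fromBlocks succSelect 0 0 succSelect]`, the matrix `Q M P` is block lower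
triangular. -/
theorem charpoly_partIndicator_mul_mul_transpose_add_diagonal (K : Matrix (Fin 2) (Fin 2) R)
    (d : Fin 2 → R) :
    (partIndicator R (Fin (m + 1)) (Fin (k + 1)) * K * (partIndicator R _ _)ᵀ +
      diagonal (d ∘ sumPart)).charpoly =
    (X - C (d 0)) ^ m * (X - C (d 1)) ^ k *
      (diagonal ![(m + 1 : R), k + 1] * K + diagonal d).charpoly := by
  set U := partIndicator R (Fin (m + 1)) (Fin (k + 1))
  set V := fromBlocks (succDiff R m) 0 0 (succDiff R k)
  set S := fromBlocks (succSelect R m) 0 0 (succSelect R k)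
  set M := U * K * Uᵀ + diagonal (d ∘ sumPart : Fin (m + 1) ⊕ Fin (k + 1) → R)
  set B := diagonal ![(m + 1 : R), k + 1] * K + diagonal d
  have hQP : fromRows Uᵀ S * fromCols (partFirstIndicator R m k) V = 1 := by
    rw [fromRows_mul_fromCols, partIndicator_transpose_mul_partFirstIndicator,
      partIndicator_transpose_mul_fromBlocks_succDiff,
      fromBlocks_succSelect_mul_partFirstIndicator,
      fromBlocks_succSelect_mul_fromBlocks_succDiff, fromBlocks_one]
  have hcard : Fintype.card (Fin (m + 1) ⊕ Fin (k + 1)) =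
      Fintype.card (Fin 2 ⊕ (Fin m ⊕ Fin k)) := by
    simp only [Fintype.card_sum, Fintype.card_fin]
    omega
  have hUM : Uᵀ * M = B * Uᵀ := by
    simp only [M, B, U, Matrix.mul_add, Matrix.add_mul, ← Matrix.mul_assoc,
      partIndicator_transpose_mul_self, partIndicator_transpose_mul_diagonal]
    simp
  have hMV : M * V = V * diagonal (d ∘ sumPart : Fin m ⊕ Fin k → R) := by
    rw [Matrix.add_mul, Matrix.mul_assoc _ Uᵀ, partIndicator_transpose_mul_fromBlocks_succDiff,
      Matrix.mul_zero, zero_add, diagonal_comp_sumPart_mul_fromBlocks]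
  have hQMP : fromRows Uᵀ S * M * fromCols (partFirstIndicator R m k) V =
      fromBlocks B 0 (S * M * partFirstIndicator R m k)
        (diagonal (d ∘ sumPart : Fin m ⊕ Fin k → R)) := by
    rw [fromRows_mul, fromRows_mul_fromCols, hUM, Matrix.mul_assoc B, Matrix.mul_assoc B,
      Matrix.mul_assoc S M V, hMV, ← Matrix.mul_assoc S V,
      partIndicator_transpose_mul_partFirstIndicator,
      partIndicator_transpose_mul_fromBlocks_succDiff,
      fromBlocks_succSelect_mul_fromBlocks_succDiff, Matrix.mul_one, Matrix.mul_zero,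
      Matrix.one_mul]
  rw [← charpoly_mul_mul_of_mul_eq_one _ hcard hQP, hQMP, charpoly_fromBlocks_zero₁₂,
    charpoly_diagonal, Fintype.prod_sum_type, mul_comm]
  simp [sumPart]

end TwoParts

theorem SimpleGraph.dist_eq_two_of_mem_commonNeighbors {V : Type*} {G : SimpleGraph V}
    {u v w : V} (hne : u ≠ v) (hadj : ¬G.Adj u v) (hw : w ∈ G.commonNeighbors u v) :
    G.dist u v = 2 := by
  simp [SimpleGraph.dist, G.edist_eq_two_iff.mpr ⟨hne, hadj, w, hw⟩]

theorem gjoin_dist_inr_inr_of_not_adj {V₁ V₂ : Type*} (G₁ : SimpleGraph V₁)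
    {G₂ : SimpleGraph V₂} [Nonempty V₁] {u v : V₂} (hne : u ≠ v) (hadj : ¬G₂.Adj u v) :
    (gjoin G₁ G₂).dist (.inr u) (.inr v) = 2 :=
  SimpleGraph.dist_eq_two_of_mem_commonNeighbors (by simpa) hadj
    (w := .inl (Classical.arbitrary V₁)) ⟨trivial, trivial⟩

section CompleteSplit

variable {a b : ℕ} [NeZero a]

noncomputable def completeSplitRecipDist : Matrix (Fin 2) (Fin 2) ℝ := !![1, 1; 1, 1 / 2]

theorem one_div_dist_completeSplit (u v : Fin a ⊕ Fin b) :
    1 / ((gjoin (⊤ : SimpleGraph (Fin a)) ⊥).dist u v : ℝ) =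
      if u = v then 0 else completeSplitRecipDist (sumPart u) (sumPart v) := by
  split_ifs with h
  · simp [h]
  rcases u with u | u <;> rcases v with v | v
  · have hadj : (⊤ : SimpleGraph (Fin a)).Adj u v :=
      (SimpleGraph.top_adj u v).mpr (by simpa using h)
    rw [SimpleGraph.dist_eq_one_iff_adj.mpr (by exact hadj)]
    simp [completeSplitRecipDist, sumPart]
  · rw [SimpleGraph.dist_eq_one_iff_adj.mpr trivial]
    simp [completeSplitRecipDist, sumPart]
  · rw [SimpleGraph.dist_eq_one_iff_adj.mpr trivial]
    simp [completeSplitRecipDist, sumPart]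
  · rw [gjoin_dist_inr_inr_of_not_adj _ (by simpa using h) (by simp)]
    simp [completeSplitRecipDist, sumPart]

theorem RTr_completeSplit (v : Fin a ⊕ Fin b) :
    RTr (gjoin (⊤ : SimpleGraph (Fin a)) ⊥) v =
      a * completeSplitRecipDist 0 (sumPart v) + b * completeSplitRecipDist 1 (sumPart v) -
        completeSplitRecipDist (sumPart v) (sumPart v) := by
  have hterm : ∀ u ∈ univ.erase v, 1 / ((gjoin (⊤ : SimpleGraph (Fin a)) ⊥).dist u v : ℝ) =
      completeSplitRecipDist (sumPart u) (sumPart v) := fun u hu ↦ by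
    rw [one_div_dist_completeSplit, if_neg (ne_of_mem_erase hu)]
  rw [RTr, sum_congr rfl hterm, sum_erase_eq_sub (mem_univ v), Fintype.sum_sum_type]
  simp [sumPart]

theorem RDalpha_completeSplit (α : ℝ) :
    RDalpha (gjoin (⊤ : SimpleGraph (Fin a)) (⊥ : SimpleGraph (Fin b))) α =
      partIndicator ℝ (Fin a) (Fin b) * ((1 - α) • completeSplitRecipDist) *
          (partIndicator ℝ _ _)ᵀ +
        diagonal (![α * ((a : ℝ) + b) - 1, (α * (((a : ℝ) + b) + a) - 1) / 2] ∘ sumPart) := by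
  ext u v
  rw [Matrix.add_apply, partIndicator_mul_mul_transpose_apply]
  by_cases h : u = v
  · subst h
    rcases u with u | u <;>
      simp [RDalpha, RDmat, RTr_completeSplit, completeSplitRecipDist, sumPart] <;> ring
  · simp only [RDalpha, RDmat, Matrix.add_apply, Matrix.smul_apply, of_apply, if_neg h,
      one_div_dist_completeSplit]
    simp [h]

end CompleteSplit

theorem stmt2_general (a b : ℕ) (ha : 1 ≤ a) (hb : 2 ≤ b) (α : ℝ) :
    (RDalpha (gjoin (⊤ : SimpleGraph (Fin a)) (⊥ : SimpleGraph (Fin b))) α).charpoly.roots =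
      Multiset.replicate (a - 1) (α * ((a : ℝ) + b) - 1)
      + Multiset.replicate (b - 1) ((α * (((a : ℝ) + b) + a) - 1) / 2)
      + {((α + 1) * ((a : ℝ) + b) - (b : ℝ) / 2 - 3 / 2
            + Real.sqrt (((α - 1) * ((a : ℝ) - b) - (b : ℝ) / 2 + 1 / 2) ^ 2
                + 4 * (1 - α) ^ 2 * a * b)) / 2,
         ((α + 1) * ((a : ℝ) + b) - (b : ℝ) / 2 - 3 / 2
            - Real.sqrt (((α - 1) * ((a : ℝ) - b) - (b : ℝ) / 2 + 1 / 2) ^ 2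
                + 4 * (1 - α) ^ 2 * a * b)) / 2} := by
  obtain ⟨m, rfl⟩ : ∃ m, a = m + 1 := ⟨a - 1, by omega⟩
  obtain ⟨k, rfl⟩ : ∃ k, b = k + 1 := ⟨b - 1, by omega⟩
  rw [RDalpha_completeSplit, charpoly_partIndicator_mul_mul_transpose_add_diagonal,
    charpoly_fin_two_eq_of_sq_eq _ ?trace ?disc, roots_pow_mul_pow_mul_X_sub_C_mul_X_sub_C]
  -- `rfl` fixes the trace `t` and the root `s` of the discriminant to those of the statement.
  · rfl
  case trace =>
    simp [trace_fin_two, completeSplitRecipDist]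
    ring
  case disc =>
    rw [Real.sq_sqrt (by positivity)]
    simp [det_fin_two, completeSplitRecipDist]
    ring

/-- Corollary 2.4: the spectrum of `RD_α(CS_{a,b})` for the complete split graph
`CS_{a,b} = K_a ∨ (complement of K_b)`. -/
theorem stmt2 (a b : ℕ) (ha : 1 ≤ a) (hb : 2 ≤ b) (α : ℝ) (hα : α ∈ Set.Icc (0 : ℝ) 1) :
    (RDalpha (gjoin (⊤ : SimpleGraph (Fin a)) (⊥ : SimpleGraph (Fin b))) α).charpoly.roots =
      Multiset.replicate (a - 1) (α * ((a : ℝ) + b) - 1)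
      + Multiset.replicate (b - 1) ((α * (((a : ℝ) + b) + a) - 1) / 2)
      + {((α + 1) * ((a : ℝ) + b) - (b : ℝ) / 2 - 3 / 2
            + Real.sqrt (((α - 1) * ((a : ℝ) - b) - (b : ℝ) / 2 + 1 / 2) ^ 2
                + 4 * (1 - α) ^ 2 * a * b)) / 2,
         ((α + 1) * ((a : ℝ) + b) - (b : ℝ) / 2 - 3 / 2
            - Real.sqrt (((α - 1) * ((a : ℝ) - b) - (b : ℝ) / 2 + 1 / 2) ^ 2
                + 4 * (1 - α) ^ 2 * a * b)) / 2} :=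
  stmt2_general a b ha hb α
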